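/- arXiv:2305.04435 — 5 statements merged into one kernel-verified Lean document; each statement's English description precedes it below -/
import Mathlib

section
/- Let n be a prime, m : ℕ, and let x : Fin m → ZMod n → ZMod n satisfy the promise. Then GIP(x) = Σ_{a : ZMod n} a * (m_{a,0}(x) : ZMod n), where the cardinalities m_{a,0}(x) are cast into ZMod n. -/
/-- The input `x` satisfies the promise if every coordinate column lies in the
span of `(1,…,1)` and `(0,1,…,n-1)`, i.e. has the form `p ↦ a + p * b`. -/
def SatisfiesPromise {n m : ℕ} (x : Fin m → ZMod n → ZMod n) : Prop :=
  ∀ i : Fin m, ∃ a b : ZMod n, ∀ p : ZMod n, x i p = a + p * b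

/-- The generalized inner product `GIP(x) = ∑_i ∏_p x i p`. -/
def GIP {n m : ℕ} [NeZero n] (x : Fin m → ZMod n → ZMod n) : ZMod n :=
  ∑ i : Fin m, ∏ p : ZMod n, x i p

/-- `m_{a,b}(x)`: the number of coordinates `i` whose column is `p ↦ a + p * b`. -/
def mCard {n m : ℕ} [NeZero n] (x : Fin m → ZMod n → ZMod n) (a b : ZMod n) : ℕ :=
  (Finset.univ.filter (fun i : Fin m => ∀ p : ZMod n, x i p = a + p * b)).card

/-- Under the promise, `GIP(x) = ∑_a a * m_{a,0}(x)` in `ZMod n`. -/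
theorem stmt_4 (n : ℕ) [Fact n.Prime] (m : ℕ) (x : Fin m → ZMod n → ZMod n)
    (hx : SatisfiesPromise x) :
    GIP x = ∑ a : ZMod n, a * (mCard x a 0 : ZMod n) := by
  have key : ∀ i : Fin m, ∏ p : ZMod n, x i p =
      if (∀ p : ZMod n, x i p = x i 0) then x i 0 else 0 := by
    intro i
    obtain ⟨a, b, hab⟩ := hx i
    by_cases hb : b = 0
    · have hc : ∀ p : ZMod n, x i p = x i 0 := by
        intro p; rw [hab p, hab 0, hb]; ring
      rw [if_pos hc]
      have : ∏ p : ZMod n, x i p = ∏ _p : ZMod n, x i 0 :=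
        Finset.prod_congr rfl (fun p _ => hc p)
      rw [this, Finset.prod_const, Finset.card_univ, ZMod.card, ZMod.pow_card]
    · have hnc : ¬ (∀ p : ZMod n, x i p = x i 0) := by
        intro h
        have h1 := h 1
        rw [hab 1, hab 0] at h1
        apply hb
        have : (1 : ZMod n) * b = 0 * b := by
          have := h1; linear_combination this
        simpa using this
      rw [if_neg hnc]
      have : ∏ p : ZMod n, x i p = ∏ p : ZMod n, (a + p * b) :=
        Finset.prod_congr rfl (fun p _ => hab p)
      rw [this]
      let e : ZMod n ≃ ZMod n := (Equiv.mulRight₀ b hb).trans (Equiv.addLeft a)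
      have he : ∀ p : ZMod n, e p = a + p * b := by intro p; rfl
      calc ∏ p : ZMod n, (a + p * b) = ∏ p : ZMod n, id (e p) :=
            Finset.prod_congr rfl (fun p _ => (he p).symm)
        _ = ∏ c : ZMod n, id c := Equiv.prod_comp e id
        _ = 0 := Finset.prod_eq_zero (Finset.mem_univ (0 : ZMod n)) rfl
  rw [GIP]
  rw [Finset.sum_congr rfl (fun i _ => key i)]
  have rhs : ∀ a : ZMod n, a * (mCard x a 0 : ZMod n)
      = ∑ i : Fin m, if (∀ p : ZMod n, x i p = a) then a else 0 := by
    intro a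
    have : mCard x a 0 = (Finset.univ.filter (fun i : Fin m => ∀ p : ZMod n, x i p = a)).card := by
      simp [mCard]
    rw [this, ← Finset.sum_filter, Finset.sum_const, nsmul_eq_mul, mul_comm]
  rw [Finset.sum_congr rfl (fun a _ => rhs a), Finset.sum_comm]
  refine Finset.sum_congr rfl (fun i _ => ?_)
  by_cases h : ∀ p : ZMod n, x i p = x i 0
  · rw [if_pos h]
    have : ∀ a : ZMod n, (if (∀ p : ZMod n, x i p = a) then a else 0)
        = if a = x i 0 then a else 0 := by
      intro a
      by_cases ha : a = x i 0
      · subst ha; simp [h]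
      · rw [if_neg ha, if_neg]
        intro hc
        exact ha ((hc 0).symm)
    rw [Finset.sum_congr rfl (fun a _ => this a), Finset.sum_ite_eq' Finset.univ (x i 0) (fun a => a)]
    simp
  · rw [if_neg h]
    refine (Finset.sum_eq_zero (fun a _ => ?_)).symm
    rw [if_neg]
    intro hc
    exact h (fun p => by rw [hc p, hc 0])
end

section
/- Let n be a prime, m : ℕ, and let x : Fin m → ZMod n → ZMod n satisfy the promise. Then for every k : ZMod n, Σ_{q : ZMod n} Σ_{i : ZMod n} m_{k + i·q, -i}(x) = (Σ_{(a,b) : (ZMod n)², b ≠ 0} m_{a,b}(x)) + n * m_{k,0}(x), as an identity of natural numbers. -/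
/-- Under the promise, for every `k : ZMod n`,
`∑_q ∑_i m_{k + i·q, -i}(x) = (∑_{b ≠ 0} m_{a,b}(x)) + n * m_{k,0}(x)`. -/
theorem stmt_7 (n : ℕ) [Fact n.Prime] (m : ℕ) (x : Fin m → ZMod n → ZMod n)
    (hx : SatisfiesPromise x) (k : ZMod n) :
    ∑ q : ZMod n, ∑ i : ZMod n, mCard x (k + i * q) (-i) =
      (∑ ab ∈ Finset.univ.filter (fun ab : ZMod n × ZMod n => ab.2 ≠ 0),
        mCard x ab.1 ab.2) + n * mCard x k 0 := by
  haveI : NeZero n := ⟨(Fact.out : n.Prime).ne_zero⟩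
  rw [Finset.sum_comm]
  rw [← Finset.sum_filter_add_sum_filter_not Finset.univ (fun i : ZMod n => i ≠ 0)]
  congr 1
  · rw [← Finset.sum_product']
    refine Finset.sum_nbij' (fun p => (k + p.1 * p.2, -p.1))
      (fun ab => (-ab.2, (ab.1 - k) * (-ab.2)⁻¹)) ?_ ?_ ?_ ?_ ?_
    · intro p hp
      simp only [Finset.mem_product, Finset.mem_filter, Finset.mem_univ, true_and] at hp ⊢
      simpa using hp
    · intro ab hab
      simp only [Finset.mem_filter, Finset.mem_univ, true_and] at hab
      simp only [Finset.mem_product, Finset.mem_filter, Finset.mem_univ, true_and, and_true]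
      simpa using hab
    · intro p hp
      simp only [Finset.mem_product, Finset.mem_filter, Finset.mem_univ, true_and] at hp
      have h1 : p.1 ≠ 0 := hp.1
      have h2 : (k + p.1 * p.2 - k) * (-(-p.1))⁻¹ = p.2 := by
        rw [neg_neg, add_sub_cancel_left, mul_comm p.1 p.2, mul_inv_cancel_right₀ h1]
      simp [Prod.ext_iff, h2]
      rw [mul_comm p.1 p.2, mul_inv_cancel_right₀ h1]
    · intro ab hab
      simp only [Finset.mem_filter, Finset.mem_univ, true_and] at hab
      ext
      · simp only
        rw [mul_comm (-ab.2)]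
        rw [mul_assoc]
        rw [inv_mul_cancel₀ (neg_ne_zero.mpr hab)]
        ring
      · simp
    · intro p hp; rfl
  · have : Finset.univ.filter (fun i : ZMod n => ¬ i ≠ 0) = {0} := by
      ext i; simp
    rw [this, Finset.sum_singleton]
    simp [Finset.sum_const, Finset.card_univ, ZMod.card, mul_comm]
end

section
/- Let n be an odd prime, and let x : Fin m → ZMod n → ZMod n and x' : Fin m' → ZMod n → ZMod n both satisfy the promise. If β_{p,k}(x) ≡ β_{p,k}(x') (mod n²) for all p, k : ZMod n, then GIP(x) = GIP(x'). -/
/-- `β_{p,k}(x)`: the number of coordinates of player `p`'s vector equal to `k`. -/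
def betaCard {n m : ℕ} (x : Fin m → ZMod n → ZMod n) (p k : ZMod n) : ℕ :=
  (Finset.univ.filter (fun i : Fin m => x i p = k)).card

lemma sum_pow_dvd (n : ℕ) (hn : 2 ≤ n) (hodd : Odd n) :
    (n:ℤ)^2 ∣ ∑ j ∈ Finset.range n, (j:ℤ)^n := by
  set S : ℤ := ∑ j ∈ Finset.range n, (j:ℤ)^n with hS
  have h1 : ∀ j ∈ Finset.range n, (n:ℤ)^2 ∣ ((n:ℤ) - j)^n + (j:ℤ)^n := by
    intro j _
    have h := dvd_sub_pow_of_dvd_sub (p := n) (a := (n:ℤ) - j) (b := -j)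
      (by simp) 1
    rw [pow_one] at h
    rw [hodd.neg_pow] at h
    simpa [sub_neg_eq_add] using h
  have h2 : (n:ℤ)^2 ∣ ∑ j ∈ Finset.range n, (((n:ℤ) - j)^n + (j:ℤ)^n) :=
    Finset.dvd_sum h1
  have h3 : ∑ j ∈ Finset.range n, ((n:ℤ) - j)^n = S + (n:ℤ)^n := by
    have hr := Finset.sum_range_reflect (fun j => ((j:ℤ)+1)^n) n
    have hl : ∑ j ∈ Finset.range n, ((n:ℤ) - j)^n
        = ∑ j ∈ Finset.range n, ((((n - 1 - j : ℕ)):ℤ)+1)^n := by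
      apply Finset.sum_congr rfl
      intro j hj
      have hj' : j < n := Finset.mem_range.mp hj
      have : ((n - 1 - j : ℕ) : ℤ) = (n:ℤ) - 1 - j := by omega
      rw [this]; ring_nf
    rw [hl, hr]
    have hstep : ∑ j ∈ Finset.range (n+1), (j:ℤ)^n = S + (n:ℤ)^n := by
      rw [Finset.sum_range_succ]
    rw [← hstep, Finset.sum_range_succ']
    have h0 : ((0:ℕ):ℤ)^n = 0 := by
      simp [zero_pow (by omega : n ≠ 0)]
    rw [h0, add_zero]
    push_cast
    simp [add_comm]
  have h4 : (n:ℤ)^2 ∣ 2 * S + (n:ℤ)^n := by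
    rw [Finset.sum_add_distrib, h3] at h2
    have : S + (n:ℤ)^n + S = 2 * S + (n:ℤ)^n := by ring
    rwa [this] at h2
  have h5 : (n:ℤ)^2 ∣ (n:ℤ)^n := by
    exact pow_dvd_pow _ hn
  have h6 : (n:ℤ)^2 ∣ 2 * S := by
    have := h4.sub h5
    simpa using this
  have hcop : IsCoprime ((n:ℤ)^2) 2 := by
    have hc : Nat.Coprime n 2 := hodd.coprime_two_right
    exact (Int.isCoprime_iff_gcd_eq_one.mpr (by simpa [Int.gcd] using hc)).pow_left
  exact hcop.dvd_of_dvd_mul_left h6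

lemma zmod_sum_val (n : ℕ) [NeZero n] (g : ℕ → ℤ) :
    ∑ k : ZMod n, g k.val = ∑ j ∈ Finset.range n, g j := by
  apply Finset.sum_bij (fun k _ => k.val)
  · intro k _; exact Finset.mem_range.mpr k.val_lt
  · intro a _ b _ h; exact ZMod.val_injective n h
  · intro j hj
    exact ⟨(j : ZMod n), Finset.mem_univ _, ZMod.val_cast_of_lt (Finset.mem_range.mp hj)⟩
  · intro k _; rfl

lemma column_lemma (n : ℕ) [Fact n.Prime] (hodd : Odd n) (c : ZMod n → ZMod n)
    (h : ∃ a b : ZMod n, ∀ p : ZMod n, c p = a + p * b) :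
    ∃ g : ℤ, ((g : ZMod n) = ∏ p : ZMod n, c p) ∧
      (n:ℤ)^2 ∣ (∑ p : ZMod n, ((c p).val : ℤ)^n) - n * g := by
  obtain ⟨a, b, hab⟩ := h
  have hn2 : 2 ≤ n := (Fact.out : n.Prime).two_le
  by_cases hb : b = 0
  · refine ⟨((a.val : ℤ))^n, ?_, ?_⟩
    · have : ∏ p : ZMod n, c p = a ^ n := by
        rw [Finset.prod_congr rfl (fun p _ => by rw [hab p, hb, mul_zero, add_zero])]
        simp [Finset.prod_const, ZMod.card]
      rw [this]
      push_cast
      simp [ZMod.natCast_val, ZMod.cast_id]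
    · have : ∑ p : ZMod n, ((c p).val : ℤ)^n = n * ((a.val : ℤ))^n := by
        rw [Finset.sum_congr rfl (fun p _ => by rw [hab p, hb, mul_zero, add_zero])]
        simp [Finset.sum_const, ZMod.card, mul_comm]
      rw [this, sub_self]
      exact dvd_zero _
  · refine ⟨0, ?_, ?_⟩
    · have h0 : c (-a * b⁻¹) = 0 := by
        rw [hab, neg_mul, neg_mul, mul_assoc, inv_mul_cancel₀ hb, mul_one, add_neg_cancel]
      exact ((Finset.prod_eq_zero (Finset.mem_univ _) h0).symm : _) ▸ by simp
    · rw [mul_zero, sub_zero]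
      have hbij : Function.Bijective (fun p : ZMod n => a + p * b) := by
        rw [Finite.injective_iff_bijective.symm]
        intro p q hpq
        simp only [add_right_inj] at hpq
        exact mul_right_cancel₀ hb hpq
      have hsum : ∑ p : ZMod n, ((c p).val : ℤ)^n = ∑ k : ZMod n, ((k.val : ℤ))^n :=
        Fintype.sum_bijective _ hbij _ _ (fun p => by rw [hab])
      rw [hsum, zmod_sum_val n (fun j => (j:ℤ)^n)]
      exact sum_pow_dvd n hn2 hodd


lemma beta_sum {n : ℕ} [NeZero n] {m : ℕ} (x : Fin m → ZMod n → ZMod n) (p : ZMod n) :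
    ∑ k : ZMod n, ((k.val : ℤ))^n * (betaCard x p k : ℤ)
      = ∑ i : Fin m, (((x i p).val : ℤ))^n := by
  rw [← Finset.sum_fiberwise Finset.univ (fun i => x i p) (fun i => (((x i p).val : ℤ))^n)]
  apply Finset.sum_congr rfl
  intro k _
  rw [Finset.sum_congr rfl (fun i hi =>
    by rw [(Finset.mem_filter.mp hi).2] : ∀ i ∈ Finset.univ.filter (fun i => x i p = k),
      (((x i p).val : ℤ))^n = ((k.val : ℤ))^n)]
  simp [betaCard, mul_comm]

lemma key_lemma {n : ℕ} [Fact n.Prime] (hodd : Odd n) {m : ℕ}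
    (x : Fin m → ZMod n → ZMod n) (hx : SatisfiesPromise x) :
    ∃ G : ℤ, ((G : ZMod n) = GIP x) ∧
      (n:ℤ)^2 ∣ (∑ p : ZMod n, ∑ k : ZMod n, ((k.val : ℤ))^n * (betaCard x p k : ℤ))
        - n * G := by
  choose g hg1 hg2 using fun i : Fin m => column_lemma n hodd (x i) (hx i)
  refine ⟨∑ i, g i, ?_, ?_⟩
  · push_cast
    exact Finset.sum_congr rfl (fun i _ => hg1 i)
  · have hT : (∑ p : ZMod n, ∑ k : ZMod n, ((k.val : ℤ))^n * (betaCard x p k : ℤ))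
        = ∑ i : Fin m, ∑ p : ZMod n, (((x i p).val : ℤ))^n := by
      rw [Finset.sum_congr rfl (fun p _ => beta_sum x p), Finset.sum_comm]
    rw [hT, Finset.mul_sum, ← Finset.sum_sub_distrib]
    exact Finset.dvd_sum (fun i _ => hg2 i)

/-- For an odd prime `n`, the symbol counts `β_{p,k}` modulo `n²` determine the
value of `GIP` on promise-satisfying inputs. -/
theorem stmt_9 (n : ℕ) [Fact n.Prime] (hodd : Odd n) (m m' : ℕ)
    (x : Fin m → ZMod n → ZMod n) (x' : Fin m' → ZMod n → ZMod n)
    (hx : SatisfiesPromise x) (hx' : SatisfiesPromise x')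
    (hβ : ∀ p k : ZMod n, betaCard x p k ≡ betaCard x' p k [MOD n ^ 2]) :
    GIP x = GIP x' := by
  obtain ⟨G, hG1, hG2⟩ := key_lemma hodd x hx
  obtain ⟨G', hG1', hG2'⟩ := key_lemma hodd x' hx'
  set Tx : ℤ := ∑ p : ZMod n, ∑ k : ZMod n, ((k.val : ℤ))^n * (betaCard x p k : ℤ) with hTx
  set Tx' : ℤ := ∑ p : ZMod n, ∑ k : ZMod n, ((k.val : ℤ))^n * (betaCard x' p k : ℤ) with hTx'
  have hT : (n:ℤ)^2 ∣ Tx' - Tx := by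
    rw [hTx, hTx', ← Finset.sum_sub_distrib]
    refine Finset.dvd_sum fun p _ => ?_
    rw [← Finset.sum_sub_distrib]
    refine Finset.dvd_sum fun k _ => ?_
    have hd : ((n:ℤ))^2 ∣ (betaCard x' p k : ℤ) - (betaCard x p k : ℤ) := by
      have := Nat.modEq_iff_dvd.mp (hβ p k)
      push_cast at this ⊢
      exact this
    rw [← mul_sub]
    exact hd.mul_left _
  have hnG : (n:ℤ)^2 ∣ (n:ℤ) * (G' - G) := by
    have h := (hT.sub hG2').add hG2
    have e : (Tx' - Tx) - (Tx' - ↑n * G') + (Tx - ↑n * G) = ↑n * (G' - G) := by ring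
    rwa [e] at h
  have hn0 : (n:ℤ) ≠ 0 := by
    exact_mod_cast (Fact.out : n.Prime).ne_zero
  have hdvd : (n:ℤ) ∣ G' - G := by
    obtain ⟨c, hc⟩ := hnG
    refine ⟨c, mul_left_cancel₀ hn0 ?_⟩
    rw [hc]; ring
  have hcast : ((G' - G : ℤ) : ZMod n) = 0 := (ZMod.intCast_zmod_eq_zero_iff_dvd _ n).mpr hdvd
  push_cast at hcast
  rw [← hG1, ← hG1']
  exact (sub_eq_zero.mp hcast).symm
end

section
/- Let m be an even natural number with 3^(m-1) > 8^(m/2), and let C be a finite set of functions Fin m → Fin 3 with |C| ≥ 3^(m-1). Then there exist two distinct coordinates i₁ ≠ i₂ in Fin m such that for every pair (u, v) ∈ Fin 3 × Fin 3 there exists c ∈ C with c i₁ = u and c i₂ = v, i.e., all nine patterns of Fin 3 × Fin 3 appear among the projections of C onto coordinates (i₁, i₂). -/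
/-- Claim 1 of the lower-bound argument: any family of at least `3^(m-1)`
ternary sequences of even length `m` with `3^(m-1) > 8^(m/2)` realizes all
nine patterns on some pair of distinct coordinates. -/
theorem stmt_11 (m : ℕ) (hm : Even m) (hbig : 3 ^ (m - 1) > 8 ^ (m / 2))
    (C : Finset (Fin m → Fin 3)) (hC : C.card ≥ 3 ^ (m - 1)) :
    ∃ i₁ i₂ : Fin m, i₁ ≠ i₂ ∧
      ∀ u v : Fin 3, ∃ c ∈ C, c i₁ = u ∧ c i₂ = v := by
  by_contra hcon
  push_neg at hcon
  obtain ⟨t, ht⟩ := hm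
  have ha : ∀ k : Fin (m / 2), 2 * (k : ℕ) < m := by
    intro k; have := k.isLt; omega
  have hb : ∀ k : Fin (m / 2), 2 * (k : ℕ) + 1 < m := by
    intro k; have := k.isLt; omega
  -- for each pair of coordinates, a missed pattern
  have hmiss : ∀ k : Fin (m / 2), ∃ p : Fin 3 × Fin 3,
      ∀ c ∈ C, ¬(c ⟨2 * k, ha k⟩ = p.1 ∧ c ⟨2 * k + 1, hb k⟩ = p.2) := by
    intro k
    have hne : (⟨2 * k, ha k⟩ : Fin m) ≠ ⟨2 * k + 1, hb k⟩ := by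
      simp [Fin.ext_iff]
    obtain ⟨u, v, huv⟩ := hcon ⟨2 * k, ha k⟩ ⟨2 * k + 1, hb k⟩ hne
    exact ⟨(u, v), fun c hc h => huv c hc h.1 h.2⟩
  choose miss hmiss using hmiss
  set F : (Fin m → Fin 3) → (Fin (m / 2) → Fin 3 × Fin 3) :=
    fun c k => (c ⟨2 * k, ha k⟩, c ⟨2 * k + 1, hb k⟩) with hF
  set T : Finset (Fin (m / 2) → Fin 3 × Fin 3) :=
    Fintype.piFinset (fun k => ({miss k}ᶜ : Finset (Fin 3 × Fin 3))) with hT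
  have hmap : ∀ c ∈ C, F c ∈ T := by
    intro c hc
    simp only [hT, Fintype.mem_piFinset, Finset.mem_compl, Finset.mem_singleton]
    intro k hk
    exact hmiss k c hc ⟨congrArg Prod.fst hk, congrArg Prod.snd hk⟩
  have hinj : Set.InjOn F C := by
    intro c hc c' hc' hcc
    funext i
    have hk : (i : ℕ) / 2 < m / 2 := by have := i.isLt; omega
    have := congrFun hcc ⟨(i : ℕ) / 2, hk⟩
    have h1 := congrArg Prod.fst this
    have h2 := congrArg Prod.snd this
    simp only [hF] at h1 h2
    rcases Nat.even_or_odd (i : ℕ) with he | ho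
    · have hi : i = ⟨2 * ((i : ℕ) / 2), ha ⟨(i : ℕ) / 2, hk⟩⟩ := by
        apply Fin.ext; obtain ⟨s, hs⟩ := he; simp; omega
      rw [hi]; exact h1
    · have hi : i = ⟨2 * ((i : ℕ) / 2) + 1, hb ⟨(i : ℕ) / 2, hk⟩⟩ := by
        apply Fin.ext; obtain ⟨s, hs⟩ := ho; simp; omega
      rw [hi]; exact h2
  have hcard : C.card ≤ T.card := Finset.card_le_card_of_injOn F hmap hinj
  have hTcard : T.card = 8 ^ (m / 2) := by
    rw [hT, Fintype.card_piFinset]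
    have : ∀ k : Fin (m / 2), ({miss k}ᶜ : Finset (Fin 3 × Fin 3)).card = 8 := by
      intro k
      rw [Finset.card_compl, Finset.card_singleton]
      simp
    simp [this]
  omega
end

section
/- Let m ≥ 2 be an even natural number with 3^(m-1) > 8^(m/2). Then there do not exist functions γ : (Fin m → ZMod 3) → Fin 2, β : (Fin m → ZMod 3) → Fin 3, and d : (Fin m → ZMod 3) → Fin 2 → Fin 3 → ZMod 3 such that for all x, y, z : Fin m → ZMod 3 satisfying x i + y i + z i = 0 for every i : Fin m, one has d x (γ y) (β z) = Σ_{i : Fin m} (x i) * (y i) * (z i). -/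
open Finset

section GIPAux

variable {m : ℕ}

private lemma zsum3 {M : Type*} [AddCommMonoid M] (f : ZMod 3 → M) :
    ∑ t : ZMod 3, f t = f 0 + f 1 + f 2 := by
  have h : (univ : Finset (ZMod 3)) = {0, 1, 2} := by decide
  rw [h, Finset.sum_insert (by decide), Finset.sum_insert (by decide), Finset.sum_singleton,
    add_assoc]

/-- The quadratic form attached to a direction `w`. -/
private def Qf (w u : Fin m → ZMod 3) : ZMod 3 := ∑ i, w i * u i * (u i + w i)

/-- Counts of the partial quadratic form restricted to a finset of coordinates. -/
private def AS (w : Fin m → ZMod 3) (S : Finset (Fin m)) (c : ZMod 3) : ℕ :=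
  (univ.filter (fun u : Fin m → ZMod 3 =>
    (∀ i ∉ S, u i = 0) ∧ (∑ i ∈ S, w i * u i * (u i + w i)) = c)).card

private def zw (w : Fin m → ZMod 3) : ℕ := (univ.filter (fun i => w i = 0)).card

private def rad (w : Fin m → ZMod 3) : ℕ := 3 ^ ((m + zw w + 1) / 2)

private lemma AS_recur (w : Fin m → ZMod 3) (S : Finset (Fin m)) {j : Fin m} (hj : j ∉ S)
    (c : ZMod 3) :
    AS w (insert j S) c = ∑ t : ZMod 3, AS w S (c - w j * t * (t + w j)) := by
  classical
  unfold AS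
  rw [Finset.card_eq_sum_card_fiberwise (f := fun u : Fin m → ZMod 3 => u j)
    (t := (univ : Finset (ZMod 3))) (fun x _ => mem_univ _)]
  refine Finset.sum_congr rfl fun t _ => ?_
  apply Finset.card_bij (fun u _ => Function.update u j 0)
  · intro u hu
    simp only [mem_filter, mem_univ, true_and] at hu ⊢
    obtain ⟨⟨hz, hs⟩, hjt⟩ := hu
    have hsum : ∑ i ∈ insert j S, w i * u i * (u i + w i)
        = w j * u j * (u j + w j) + ∑ i ∈ S, w i * u i * (u i + w i) :=
      Finset.sum_insert hj
    constructor
    · intro i hi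
      by_cases hij : i = j
      · subst hij; simp [Function.update]
      · rw [Function.update_of_ne hij]
        exact hz i (by simp [hij, hi])
    · have : ∑ i ∈ S, w i * (Function.update u j 0) i * ((Function.update u j 0) i + w i)
          = ∑ i ∈ S, w i * u i * (u i + w i) := by
        apply Finset.sum_congr rfl
        intro i hi
        rw [Function.update_of_ne (ne_of_mem_of_not_mem hi hj)]
      rw [this]
      rw [hsum] at hs
      rw [hjt] at hs
      linear_combination hs
  · intro u hu u' hu' h
    simp only [mem_filter] at hu hu'
    funext i
    by_cases hij : i = j
    · subst hij; rw [hu.2, hu'.2]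
    · have := congrFun h i
      rwa [Function.update_of_ne hij, Function.update_of_ne hij] at this
  · intro v hv
    simp only [mem_filter, mem_univ, true_and] at hv
    obtain ⟨hz, hs⟩ := hv
    refine ⟨Function.update v j t, ?_, ?_⟩
    · simp only [mem_filter, mem_univ, true_and]
      refine ⟨⟨?_, ?_⟩, ?_⟩
      · intro i hi
        simp only [mem_insert, not_or] at hi
        rw [Function.update_of_ne hi.1]
        exact hz i hi.2
      · rw [Finset.sum_insert hj]
        have : ∑ i ∈ S, w i * (Function.update v j t) i * ((Function.update v j t) i + w i)
            = ∑ i ∈ S, w i * v i * (v i + w i) := by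
          apply Finset.sum_congr rfl
          intro i hi
          rw [Function.update_of_ne (ne_of_mem_of_not_mem hi hj)]
        rw [this, Function.update_self, hs]
        ring
      · exact Function.update_self j t v
    · funext i
      by_cases hij : i = j
      · subst hij
        simp [Function.update_self, hz i hj]
      · rw [Function.update_of_ne hij, Function.update_of_ne hij]

private lemma AS_props (w : Fin m → ZMod 3) (S : Finset (Fin m)) :
    (∑ c : ZMod 3, AS w S c = 3 ^ S.card) ∧
    (∑ c : ZMod 3, (3 * (AS w S c : ℤ) - 3 ^ S.card) ^ 2
       = 6 * 3 ^ S.card * 3 ^ (S.filter (fun i => w i = 0)).card) := by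
  classical
  induction S using Finset.induction_on with
  | empty =>
    have hbase : ∀ c, AS w ∅ c = if c = 0 then 1 else 0 := by
      intro c
      unfold AS
      split_ifs with hc
      · subst hc
        have : (univ.filter (fun u : Fin m → ZMod 3 =>
            (∀ i ∉ (∅ : Finset (Fin m)), u i = 0) ∧
              (∑ i ∈ (∅ : Finset (Fin m)), w i * u i * (u i + w i)) = 0))
            = {(0 : Fin m → ZMod 3)} := by
          ext u
          simp [funext_iff]
        rw [this, Finset.card_singleton]
      · have : (univ.filter (fun u : Fin m → ZMod 3 =>
            (∀ i ∉ (∅ : Finset (Fin m)), u i = 0) ∧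
              (∑ i ∈ (∅ : Finset (Fin m)), w i * u i * (u i + w i)) = c))
            = ∅ := by
          ext u
          simp [Ne.symm hc]
        rw [this, Finset.card_empty]
    have b0 : AS w ∅ (0 : ZMod 3) = 1 := by rw [hbase, if_pos rfl]
    have b1 : AS w ∅ (1 : ZMod 3) = 0 := by
      rw [hbase, if_neg (by decide : ¬ (1 : ZMod 3) = 0)]
    have b2 : AS w ∅ (2 : ZMod 3) = 0 := by
      rw [hbase, if_neg (by decide : ¬ (2 : ZMod 3) = 0)]
    refine ⟨?_, ?_⟩
    · rw [zsum3, b0, b1, b2]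
      norm_num
    · rw [zsum3, b0, b1, b2]
      norm_num
  | @insert j S hj ih =>
    obtain ⟨hT, hD⟩ := ih
    rw [zsum3] at hT hD
    set A0 := AS w S 0 with hA0
    set A1 := AS w S 1 with hA1
    set A2 := AS w S 2 with hA2
    have hTZ : (3 : ℤ) ^ S.card = (A0 : ℤ) + A1 + A2 := by exact_mod_cast hT.symm
    have hcard : (insert j S).card = S.card + 1 := Finset.card_insert_of_notMem hj
    by_cases hwj : w j = 0
    · have hrec : ∀ c, AS w (insert j S) c = 3 * AS w S c := by
        intro c
        rw [AS_recur w S hj c, zsum3, hwj]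
        simp only [zero_mul, mul_zero, sub_zero]
        ring
      have hfil : ((insert j S).filter (fun i => w i = 0)).card
          = (S.filter (fun i => w i = 0)).card + 1 := by
        rw [Finset.filter_insert, if_pos hwj,
          Finset.card_insert_of_notMem (fun h => hj (Finset.mem_of_mem_filter j h))]
      refine ⟨?_, ?_⟩
      · rw [zsum3, hcard, pow_succ 3 S.card]
        simp only [hrec, ← hA0, ← hA1, ← hA2]
        omega
      · rw [zsum3, hcard, hfil]
        simp only [hrec, ← hA0, ← hA1, ← hA2]
        push_cast
        rw [pow_succ (3:ℤ) S.card, pow_succ (3:ℤ) (S.filter (fun i => w i = 0)).card, hTZ]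
        rw [hTZ] at hD
        linear_combination 9 * hD
    · have hfil : ((insert j S).filter (fun i => w i = 0)).card
          = (S.filter (fun i => w i = 0)).card := by
        rw [Finset.filter_insert, if_neg hwj]
      have hcases : w j = 1 ∨ w j = 2 := by
        revert hwj
        have h3 : ∀ a : ZMod 3, ¬ a = 0 → a = 1 ∨ a = 2 := by decide
        exact h3 (w j)
      rcases hcases with hw1 | hw1
      · have hrec : ∀ c, AS w (insert j S) c = 2 * AS w S c + AS w S (c - 2) := by
          intro c
          rw [AS_recur w S hj c, zsum3, hw1]
          rw [show ((1:ZMod 3) * 0 * (0 + 1)) = 0 by decide,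
            show ((1:ZMod 3) * 1 * (1 + 1)) = 2 by decide,
            show ((1:ZMod 3) * 2 * (2 + 1)) = 0 by decide, sub_zero]
          omega
        have e0 : AS w (insert j S) 0 = 2 * A0 + A1 := by
          rw [hrec 0, show ((0:ZMod 3) - 2) = 1 by decide]
        have e1 : AS w (insert j S) 1 = 2 * A1 + A2 := by
          rw [hrec 1, show ((1:ZMod 3) - 2) = 2 by decide]
        have e2 : AS w (insert j S) 2 = 2 * A2 + A0 := by
          rw [hrec 2, show ((2:ZMod 3) - 2) = 0 by decide]
        refine ⟨?_, ?_⟩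
        · rw [zsum3, e0, e1, e2, hcard, pow_succ 3 S.card]
          omega
        · rw [zsum3, e0, e1, e2, hcard, hfil]
          push_cast
          rw [pow_succ (3:ℤ) S.card, hTZ]
          rw [hTZ] at hD
          linear_combination 3 * hD
      · have hrec : ∀ c, AS w (insert j S) c = 2 * AS w S c + AS w S (c - 1) := by
          intro c
          rw [AS_recur w S hj c, zsum3, hw1]
          rw [show ((2:ZMod 3) * 0 * (0 + 2)) = 0 by decide,
            show ((2:ZMod 3) * 1 * (1 + 2)) = 0 by decide,
            show ((2:ZMod 3) * 2 * (2 + 2)) = 1 by decide, sub_zero]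
          omega
        have e0 : AS w (insert j S) 0 = 2 * A0 + A2 := by
          rw [hrec 0, show ((0:ZMod 3) - 1) = 2 by decide]
        have e1 : AS w (insert j S) 1 = 2 * A1 + A0 := by
          rw [hrec 1, show ((1:ZMod 3) - 1) = 0 by decide]
        have e2 : AS w (insert j S) 2 = 2 * A2 + A1 := by
          rw [hrec 2, show ((2:ZMod 3) - 1) = 1 by decide]
        refine ⟨?_, ?_⟩
        · rw [zsum3, e0, e1, e2, hcard, pow_succ 3 S.card]
          omega
        · rw [zsum3, e0, e1, e2, hcard, hfil]
          push_cast
          rw [pow_succ (3:ℤ) S.card, hTZ]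
          rw [hTZ] at hD
          linear_combination 3 * hD

private lemma level_eq (w : Fin m → ZMod 3) (c : ZMod 3) :
    (univ.filter (fun u => Qf w u = c)).card = AS w univ c := by
  unfold AS Qf
  congr 1
  apply Finset.filter_congr
  intro u _
  simp

private lemma level_bound (hm : 1 ≤ m) (w : Fin m → ZMod 3) (c : ZMod 3) :
    (univ.filter (fun u => Qf w u = c)).card ≤ 3 ^ (m - 1) + rad w := by
  obtain ⟨-, hD⟩ := AS_props w univ
  rw [zsum3] at hD
  have hcu : (univ : Finset (Fin m)).card = m := by simp
  rw [hcu] at hD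
  have hz : (univ.filter (fun i => w i = 0)).card = zw w := rfl
  rw [hz] at hD
  set r : ℕ := rad w with hr
  have hr2 : 3 ^ (m + zw w) ≤ r ^ 2 := by
    rw [hr]
    unfold rad
    rw [← pow_mul]
    apply Nat.pow_le_pow_right (by norm_num)
    omega
  have key : ∀ c', (3 * (AS w univ c' : ℤ) - 3 ^ m) ^ 2 ≤ 6 * 3 ^ m * 3 ^ (zw w) := by
    intro c'
    have h0 : ∀ c'', (0:ℤ) ≤ (3 * (AS w univ c'' : ℤ) - 3 ^ m) ^ 2 := fun _ => sq_nonneg _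
    have hall : ∀ a : ZMod 3, a = 0 ∨ a = 1 ∨ a = 2 := by decide
    rcases hall c' with h | h | h <;> subst h <;> nlinarith [h0 0, h0 1, h0 2]
  have key2 : (3 * (AS w univ c : ℤ) - 3 ^ m) ^ 2 ≤ ((3:ℤ) * r) ^ 2 := by
    calc (3 * (AS w univ c : ℤ) - 3 ^ m) ^ 2 ≤ 6 * 3 ^ m * 3 ^ (zw w) := key c
      _ ≤ 9 * 3 ^ (m + zw w) := by
          rw [pow_add]
          nlinarith [pow_pos (by norm_num : (0:ℤ) < 3) m,
            pow_pos (by norm_num : (0:ℤ) < 3) (zw w)]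
      _ ≤ 9 * r ^ 2 := by
          have : ((3:ℤ)) ^ (m + zw w) ≤ (r : ℤ) ^ 2 := by exact_mod_cast hr2
          nlinarith [this]
      _ = ((3:ℤ) * r) ^ 2 := by ring
  have habs : 3 * (AS w univ c : ℤ) - 3 ^ m ≤ 3 * r := by
    nlinarith [key2, sq_nonneg (3 * (AS w univ c : ℤ) - 3 ^ m - 3 * r)]
  have h3m : (3:ℤ) ^ m = 3 * 3 ^ (m - 1) := by
    rw [← pow_succ']
    congr 1
    omega
  rw [level_eq]
  have h1 : 3 * (AS w univ c : ℤ) ≤ 3 * (3 ^ (m-1) + r) := by rw [h3m] at habs; linarith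
  have h2 := (mul_le_mul_iff_right₀ (by norm_num : (0:ℤ) < 3)).mp h1
  exact_mod_cast h2

private lemma sum_zpow : ∑ w : Fin m → ZMod 3, 3 ^ (zw w) = 5 ^ m := by
  have h : ∀ w : Fin m → ZMod 3, (3:ℕ) ^ (zw w) = ∏ i, (if w i = 0 then 3 else 1) := by
    intro w
    unfold zw
    rw [Finset.prod_ite, Finset.prod_const, Finset.prod_const, one_pow, mul_one]
  simp only [h]
  rw [← Fintype.piFinset_univ, ← Finset.prod_univ_sum (fun _ => (univ : Finset (ZMod 3)))
    (fun _ t => if t = 0 then (3:ℕ) else 1)]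
  have h5 : ∀ i : Fin m, (∑ t : ZMod 3, (if t = 0 then (3:ℕ) else 1)) = 5 := by
    intro i
    rw [zsum3, if_pos rfl, if_neg (by decide : ¬ (1:ZMod 3) = 0),
      if_neg (by decide : ¬ (2:ZMod 3) = 0)]
  calc ∏ i : Fin m, (∑ t : ZMod 3, (if t = 0 then (3:ℕ) else 1)) = ∏ i : Fin m, 5 := by
        apply Finset.prod_congr rfl; intro i _; exact h5 i
    _ = 5 ^ m := by rw [Finset.prod_const]; simp

private lemma sum_rad_sq : (∑ w : Fin m → ZMod 3, rad w) ^ 2 ≤ 3 ^ (2 * m + 1) * 5 ^ m := by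
  have cs := Finset.sum_mul_sq_le_sq_mul_sq (univ : Finset (Fin m → ZMod 3))
    (fun _ => 1) (fun w => rad w)
  simp only [one_mul, one_pow] at cs
  have hsq : ∀ w : Fin m → ZMod 3, rad w ^ 2 ≤ 3 ^ (m + 1) * 3 ^ (zw w) := by
    intro w
    unfold rad
    rw [← pow_mul, ← pow_add]
    apply Nat.pow_le_pow_right (by norm_num)
    have : zw w ≤ m := by unfold zw; exact le_trans (Finset.card_filter_le _ _) (by simp)
    omega
  calc (∑ w : Fin m → ZMod 3, rad w) ^ 2
      ≤ (∑ w : Fin m → ZMod 3, (1:ℕ)) * ∑ w : Fin m → ZMod 3, rad w ^ 2 := cs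
    _ ≤ 3 ^ m * ∑ w : Fin m → ZMod 3, 3 ^ (m + 1) * 3 ^ (zw w) := by
        apply Nat.mul_le_mul
        · simp
        · exact Finset.sum_le_sum fun w _ => hsq w
    _ = 3 ^ m * (3 ^ (m + 1) * 5 ^ m) := by rw [← Finset.mul_sum, sum_zpow]
    _ = 3 ^ (2 * m + 1) * 5 ^ m := by
        rw [← mul_assoc, ← pow_add, show m + (m + 1) = 2 * m + 1 by omega]

private lemma sum_agree {κ : Type*} [Fintype κ] [DecidableEq κ] (f : (Fin m → ZMod 3) → κ) :
    ∑ w : Fin m → ZMod 3, (univ.filter (fun y => f y = f (y + w))).card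
      = ∑ c : κ, (univ.filter (fun y => f y = c)).card ^ 2 := by
  have h1 : ∀ w : Fin m → ZMod 3, (univ.filter (fun y => f y = f (y + w))).card
      = ∑ y : Fin m → ZMod 3, (if f y = f (y + w) then 1 else 0) := by
    intro w; rw [Finset.card_filter]
  simp only [h1]
  rw [Finset.sum_comm]
  have h2 : ∀ y : Fin m → ZMod 3,
      (∑ w : Fin m → ZMod 3, if f y = f (y + w) then 1 else 0)
        = (univ.filter (fun v => f v = f y)).card := by
    intro y
    rw [Finset.card_filter]
    refine Fintype.sum_equiv (Equiv.addLeft y) _ _ ?_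
    intro w
    simp [Equiv.addLeft, eq_comm, add_comm]
  simp only [h2]
  rw [← Finset.sum_fiberwise (univ : Finset (Fin m → ZMod 3)) f
      (fun x => (univ.filter (fun v => f v = f x)).card)]
  refine Finset.sum_congr rfl fun c _ => ?_
  rw [sq]
  rw [← Finset.sum_const_nat (m := (univ.filter (fun y => f y = c)).card) ?_]
  intro y hy
  simp only [mem_filter] at hy
  rw [hy.2]

private lemma three_smul (w : Fin m → ZMod 3) : w + w + w = 0 := by
  funext i
  have h : (w i) + w i + w i = 3 * w i := by ring
  have h3 : (3 : ZMod 3) = 0 := rfl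
  simp [h, h3]

private lemma mono_lb (hm : 1 ≤ m) (γ : (Fin m → ZMod 3) → Fin 2) (w : Fin m → ZMod 3) :
    3 ^ (m - 1) ≤ (univ.filter (fun y => γ y = γ (y + w))).card := by
  classical
  set S := univ.filter (fun y : Fin m → ZMod 3 => γ y = γ (y + w)) with hS
  set ψ : (Fin m → ZMod 3) → (Fin m → ZMod 3) := fun y =>
    if γ y = γ (y + w) then y else if γ (y + w) = γ (y + w + w) then y + w else y + w + w
    with hψ
  have hmem : ∀ y, ψ y ∈ S := by
    intro y
    simp only [hψ]
    split_ifs with h1 h2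
    · simp [hS, h1]
    · simp [hS, h2]
    · simp only [hS, mem_filter, mem_univ, true_and]
      have h3 : γ (y + w + w + w) = γ y := by rw [add_assoc y, add_assoc, three_smul, add_zero]
      rw [h3]
      have htwo : ∀ a b c : Fin 2, ¬ a = b → ¬ b = c → c = a := by decide
      exact htwo _ _ _ h1 h2
  have hfib : ∀ y, y ∈ ({ψ y, ψ y - w, ψ y - w - w} : Finset (Fin m → ZMod 3)) := by
    intro y
    simp only [hψ]
    split_ifs with h1 h2
    · simp
    · simp only [mem_insert, mem_singleton]
      right; left; rw [add_sub_cancel_right]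
    · simp only [mem_insert, mem_singleton]
      right; right; rw [add_sub_cancel_right, add_sub_cancel_right]
  have hcard : (univ : Finset (Fin m → ZMod 3)).card ≤ 3 * (univ.image ψ).card := by
    apply Finset.card_le_mul_card_image
    intro b _
    calc (univ.filter (fun a => ψ a = b)).card
        ≤ ({b, b - w, b - w - w} : Finset (Fin m → ZMod 3)).card := by
          apply Finset.card_le_card
          intro y hy
          simp only [mem_filter] at hy
          have := hfib y
          rw [hy.2] at this
          exact this
      _ ≤ 3 := by
          apply le_trans (Finset.card_insert_le _ _)
          have := Finset.card_insert_le (b - w) ({b - w - w} : Finset (Fin m → ZMod 3))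
          simp at this ⊢
          omega
  have himg : (univ.image ψ) ⊆ S := by
    intro s hs
    simp only [mem_image] at hs
    obtain ⟨y, _, rfl⟩ := hs
    exact hmem y
  have h1 : (univ : Finset (Fin m → ZMod 3)).card = 3 ^ m := by
    simp [Finset.card_univ]
  have h2 : 3 ^ m = 3 * 3 ^ (m - 1) := by
    conv_lhs => rw [show m = 1 + (m - 1) by omega]
    rw [pow_add, pow_one]
  have h4 := le_trans hcard (Nat.mul_le_mul_left 3 (Finset.card_le_card himg))
  rw [h1, h2] at h4
  omega

private lemma protocol_core (γ : (Fin m → ZMod 3) → Fin 2) (β : (Fin m → ZMod 3) → Fin 3)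
    (d : (Fin m → ZMod 3) → Fin 2 → Fin 3 → ZMod 3)
    (hd : ∀ x y z : Fin m → ZMod 3, (∀ i : Fin m, x i + y i + z i = 0) →
        d x (γ y) (β z) = ∑ i : Fin m, x i * y i * z i)
    (w y u : Fin m → ZMod 3) (hγ : γ y = γ (y + w)) (hβ : β u = β (u + w)) :
    Qf w u = Qf w y := by
  set x : Fin m → ZMod 3 := -u - y - w with hx
  have e1 := hd x y (u + w)
    (by intro i; simp only [hx, Pi.sub_apply, Pi.neg_apply, Pi.add_apply]; ring)
  have e2 := hd x (y + w) u
    (by intro i; simp only [hx, Pi.sub_apply, Pi.neg_apply, Pi.add_apply]; ring)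
  rw [hγ, ← hβ] at e1
  rw [e2] at e1
  have key : Qf w u - Qf w y = ∑ i, (x i * y i * ((u + w) i) - x i * ((y + w) i) * u i) := by
    unfold Qf
    rw [← Finset.sum_sub_distrib]
    apply Finset.sum_congr rfl
    intro i _
    simp only [hx, Pi.sub_apply, Pi.neg_apply, Pi.add_apply]
    ring
  rw [Finset.sum_sub_distrib, ← e1, sub_self] at key
  exact sub_eq_zero.mp key

end GIPAux

/-- The `n = 3` lower bound: if `m ≥ 2` is even with `3^(m-1) > 8^(m/2)`, there
is no zero-error protocol in which Bob sends one of 2 labels and Carol one of 3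
labels allowing Alice to compute `∑ i, x i * y i * z i` on all promise-satisfying
inputs `x + y + z = 0`. -/
theorem stmt_13 (m : ℕ) (hm : 2 ≤ m) (hme : Even m)
    (hbig : 3 ^ (m - 1) > 8 ^ (m / 2)) :
    ¬ ∃ (γ : (Fin m → ZMod 3) → Fin 2) (β : (Fin m → ZMod 3) → Fin 3)
        (d : (Fin m → ZMod 3) → Fin 2 → Fin 3 → ZMod 3),
      ∀ x y z : Fin m → ZMod 3, (∀ i : Fin m, x i + y i + z i = 0) →
        d x (γ y) (β z) = ∑ i : Fin m, x i * y i * z i := by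
  classical
  -- first: `m ≥ 20`
  have hm20 : 20 ≤ m := by
    by_contra h
    push_neg at h
    interval_cases m <;> first
      | exact absurd hme (by decide)
      | norm_num at hbig
  rintro ⟨γ, β, d, hd⟩
  have hm1 : 1 ≤ m := by omega
  set P : ℕ := 3 ^ (m - 1) with hP
  have h3m : (3:ℕ) ^ m = 3 * P := by
    rw [hP, ← pow_succ']
    congr 1
    omega
  set Nγ : (Fin m → ZMod 3) → ℕ :=
    fun w => (univ.filter (fun y => γ y = γ (y + w))).card with hNγ
  set Nβ : (Fin m → ZMod 3) → ℕ :=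
    fun w => (univ.filter (fun u => β u = β (u + w))).card with hNβ
  set E : ℕ := ∑ w : Fin m → ZMod 3, rad w with hE
  -- dichotomy from the protocol
  have hkey : ∀ w : Fin m → ZMod 3,
      Nβ w = 0 ∨ (Nγ w ≤ P + rad w ∧ Nβ w ≤ P + rad w) := by
    intro w
    by_cases h0 : Nβ w = 0
    · exact Or.inl h0
    right
    have hne : (univ.filter (fun u => β u = β (u + w))).Nonempty := by
      rw [← Finset.card_pos]
      simp only [hNβ] at h0
      omega
    obtain ⟨u₀, hu₀⟩ := hne
    simp only [mem_filter] at hu₀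
    have hne2 : (univ.filter (fun y => γ y = γ (y + w))).Nonempty := by
      rw [← Finset.card_pos]
      have := mono_lb hm1 γ w
      have : 0 < 3 ^ (m - 1) := pow_pos (by norm_num) _
      omega
    obtain ⟨y₀, hy₀⟩ := hne2
    simp only [mem_filter] at hy₀
    constructor
    · calc Nγ w ≤ (univ.filter (fun y => Qf w y = Qf w u₀)).card := by
            apply Finset.card_le_card
            intro y hy
            simp only [mem_filter, mem_univ, true_and] at hy ⊢
            exact (protocol_core γ β d hd w y u₀ hy hu₀.2).symm
        _ ≤ P + rad w := level_bound hm1 w _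
    · calc Nβ w ≤ (univ.filter (fun u => Qf w u = Qf w y₀)).card := by
            apply Finset.card_le_card
            intro u hu
            simp only [mem_filter, mem_univ, true_and] at hu ⊢
            exact protocol_core γ β d hd w y₀ u hy₀.2 hu
        _ ≤ P + rad w := level_bound hm1 w _
  -- global counting
  have hcardV : (univ : Finset (Fin m → ZMod 3)).card = 3 * P := by
    rw [Finset.card_univ]
    simp
    exact h3m
  have hγtot : ∑ c : Fin 2, (univ.filter (fun y => γ y = c)).card = 3 * P := by
    rw [← hcardV]
    exact (Finset.card_eq_sum_card_fiberwise (fun x _ => mem_univ (γ x))).symm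
  have hβtot : ∑ c : Fin 3, (univ.filter (fun u => β u = c)).card = 3 * P := by
    rw [← hcardV]
    exact (Finset.card_eq_sum_card_fiberwise (fun x _ => mem_univ (β x))).symm
  have hγlb : 9 * P ^ 2 ≤ 2 * ∑ w : Fin m → ZMod 3, Nγ w := by
    rw [hNγ, sum_agree γ]
    rw [Fin.sum_univ_two] at hγtot ⊢
    nlinarith [two_mul_le_add_sq (univ.filter (fun y => γ y = (0:Fin 2))).card
      (univ.filter (fun y => γ y = (1:Fin 2))).card]
  have hβlb : 9 * P ^ 2 ≤ 3 * ∑ w : Fin m → ZMod 3, Nβ w := by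
    rw [hNβ, sum_agree β]
    rw [Fin.sum_univ_three] at hβtot ⊢
    set a := (univ.filter (fun y => β y = (0:Fin 3))).card
    set b := (univ.filter (fun y => β y = (1:Fin 3))).card
    set c := (univ.filter (fun y => β y = (2:Fin 3))).card
    nlinarith [two_mul_le_add_sq a b, two_mul_le_add_sq b c, two_mul_le_add_sq a c]
  have hN0γ : Nγ 0 = 3 * P := by
    rw [← hcardV]
    simp only [hNγ, add_zero]
    simp
  have hN0β : Nβ 0 = 3 * P := by
    rw [← hcardV]
    simp only [hNβ, add_zero]
    simp
  have hNγub : ∀ w, Nγ w ≤ 3 * P := by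
    intro w
    rw [← hcardV]
    exact Finset.card_filter_le _ _
  -- the set of "β-rigid" directions
  set W₀ : Finset (Fin m → ZMod 3) :=
    (univ.erase 0).filter (fun w => Nβ w = 0) with hW₀
  set s : ℕ := W₀.card with hs
  -- β-side: s is small
  have hβside : 3 * P ^ 2 + s * P ≤ 3 * P + (3 * P - 1) * P + E := by
    have hterm : ∀ w ∈ univ.erase 0,
        Nβ w + (if Nβ w = 0 then P else 0) ≤ P + rad w := by
      intro w hw
      rcases hkey w with h | h
      · rw [if_pos h, h]
        simp
      · rcases Nat.eq_zero_or_pos (Nβ w) with h0 | h0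
        · rw [if_pos h0, h0]; simp
        · rw [if_neg (by omega)]
          simpa using h.2
    have hsum := Finset.sum_le_sum hterm
    rw [Finset.sum_add_distrib] at hsum
    have hite : s * P ≤ ∑ w ∈ univ.erase 0, (if Nβ w = 0 then P else 0) := by
      calc s * P = ∑ w ∈ W₀, P := by rw [Finset.sum_const, smul_eq_mul]
        _ = ∑ w ∈ W₀, (if Nβ w = 0 then P else 0) := by
            apply Finset.sum_congr rfl
            intro w hw
            rw [hW₀, Finset.mem_filter] at hw
            rw [if_pos hw.2]
        _ ≤ _ := by
            apply Finset.sum_le_sum_of_subset_of_nonneg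
            · intro w hw
              rw [hW₀, Finset.mem_filter] at hw
              exact hw.1
            · intros; positivity
    have hNβsplit : ∑ w ∈ univ.erase 0, Nβ w + Nβ 0 = ∑ w : Fin m → ZMod 3, Nβ w := by
      rw [add_comm, Finset.add_sum_erase _ _ (mem_univ 0)]
    have hbig1 : 3 * P ^ 2 ≤ ∑ w : Fin m → ZMod 3, Nβ w := by linarith [hβlb]
    have hrhs : ∑ w ∈ (univ.erase (0 : Fin m → ZMod 3)), (P + rad w) ≤ (3 * P - 1) * P + E := by
      rw [Finset.sum_add_distrib, Finset.sum_const, smul_eq_mul]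
      have hc1 : (univ.erase (0 : Fin m → ZMod 3)).card = 3 * P - 1 := by
        rw [Finset.card_erase_of_mem (mem_univ 0), hcardV]
      have hc2 : ∑ w ∈ (univ.erase (0 : Fin m → ZMod 3)), rad w ≤ E := by
        rw [hE]
        apply Finset.sum_le_sum_of_subset_of_nonneg
        · exact Finset.erase_subset _ _
        · intros; positivity
      rw [hc1]
      exact Nat.add_le_add_left hc2 _
    linarith [hsum, hite, hNβsplit, hbig1, hrhs, hN0β]
  have hssmall : s * P ≤ 2 * P + E := by
    have hP1 : 1 ≤ P := Nat.one_le_pow _ _ (by norm_num)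
    have h3' : (3 * P - 1) * P + P = 3 * P ^ 2 := by
      rw [Nat.sub_one_mul,
        Nat.sub_add_cancel (Nat.le_mul_of_pos_left P (by positivity : 0 < 3 * P))]
      ring
    linarith [hβside, h3']
  -- γ-side
  have hγside : 9 * P ^ 2 ≤ 6 * P ^ 2 + 16 * P + 8 * E := by
    have hterm : ∀ w ∈ univ.erase 0,
        Nγ w ≤ P + rad w + (if Nβ w = 0 then 3 * P else 0) := by
      intro w hw
      rcases hkey w with h | h
      · rw [if_pos h]
        have := hNγub w
        omega
      · rcases Nat.eq_zero_or_pos (Nβ w) with h0 | h0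
        · rw [if_pos h0]
          have := hNγub w
          omega
        · rw [if_neg (by omega)]
          have := h.1
          omega
    have hsum := Finset.sum_le_sum hterm
    have hite : ∑ w ∈ univ.erase 0, (if Nβ w = 0 then 3 * P else 0) = s * (3 * P) := by
      rw [← Finset.sum_filter, ← hW₀, Finset.sum_const, smul_eq_mul, hs]
    rw [Finset.sum_add_distrib, Finset.sum_add_distrib, hite, Finset.sum_const,
      smul_eq_mul] at hsum
    have hc1 : (univ.erase (0 : Fin m → ZMod 3)).card = 3 * P - 1 := by
      rw [Finset.card_erase_of_mem (mem_univ 0), hcardV]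
    rw [hc1] at hsum
    have hc2 : ∑ w ∈ (univ.erase (0 : Fin m → ZMod 3)), rad w ≤ E := by
      rw [hE]
      apply Finset.sum_le_sum_of_subset_of_nonneg
      · exact Finset.erase_subset _ _
      · intros; positivity
    have hNγsplit : ∑ w ∈ univ.erase 0, Nγ w + Nγ 0 = ∑ w : Fin m → ZMod 3, Nγ w := by
      rw [add_comm, Finset.add_sum_erase _ _ (mem_univ 0)]
    have hP1 : 1 ≤ P := Nat.one_le_pow _ _ (by norm_num)
    have h3' : (3 * P - 1) * P + P = 3 * P ^ 2 := by
      rw [Nat.sub_one_mul,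
        Nat.sub_add_cancel (Nat.le_mul_of_pos_left P (by positivity : 0 < 3 * P))]
      ring
    have hs3 : s * (3 * P) = 3 * (s * P) := by ring
    linarith [hγlb, hsum, hc2, hNγsplit, hN0γ, hssmall, h3', hs3]
  -- numeric endgame
  have hEsq : E ^ 2 ≤ 27 * P ^ 2 * 5 ^ m := by
    have := sum_rad_sq (m := m)
    rw [← hE] at this
    have h27 : (3:ℕ) ^ (2 * m + 1) = 27 * P ^ 2 := by
      rw [hP, ← pow_mul, show (27:ℕ) = 3 ^ 3 by norm_num, ← pow_add]
      congr 1
      omega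
    rw [h27] at this
    exact this
  have hP16 : 16 ≤ P := by
    rw [hP]
    calc (16:ℕ) ≤ 3 ^ 3 := by norm_num
      _ ≤ 3 ^ (m - 1) := Nat.pow_le_pow_right (by norm_num) (by omega)
  have hPE : P ^ 2 ≤ 4 * E := by
    have h16P : 16 * P ≤ P * P := mul_le_mul_left hP16 P
    have hpp : P * P = P ^ 2 := (sq P).symm
    linarith [hγside, h16P, hpp]
  have hfinal : P ^ 2 * P ^ 2 ≤ (432 * 5 ^ m) * P ^ 2 := by
    calc P ^ 2 * P ^ 2 ≤ (4 * E) * (4 * E) := Nat.mul_le_mul hPE hPE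
      _ = 16 * E ^ 2 := by ring
      _ ≤ 16 * (27 * P ^ 2 * 5 ^ m) := Nat.mul_le_mul_left 16 hEsq
      _ = (432 * 5 ^ m) * P ^ 2 := by ring
  have hP2pos : 0 < P ^ 2 := by positivity
  have hP2le : P ^ 2 ≤ 432 * 5 ^ m := Nat.le_of_mul_le_mul_right hfinal hP2pos
  -- but P² = 9^(m-1) > 432·5^m for m ≥ 20
  have hgt : 432 * 5 ^ m < P ^ 2 := by
    have h9 : P ^ 2 = 9 ^ (m - 1) := by
      rw [hP, ← pow_mul]
      rw [show (9:ℕ) = 3 ^ 2 by norm_num, ← pow_mul]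
      congr 1
      omega
    rw [h9]
    calc 432 * 5 ^ m = (432 * 5 ^ 20) * 5 ^ (m - 20) := by
          rw [mul_assoc, ← pow_add]
          congr 2
          omega
      _ < 9 ^ 19 * 5 ^ (m - 20) := by
          have : (432 * 5 ^ 20 : ℕ) < 9 ^ 19 := by norm_num
          exact Nat.mul_lt_mul_of_lt_of_le this (le_refl _) (by positivity)
      _ ≤ 9 ^ 19 * 9 ^ (m - 20) := by
          apply Nat.mul_le_mul_left
          exact Nat.pow_le_pow_left (by norm_num) _
      _ = 9 ^ (m - 1) := by
          rw [← pow_add]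
          congr 1
          omega
  omega
end
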